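/- arXiv:1407.0662 — 5 statements merged into one kernel-verified Lean document; each statement's English description precedes it below -/
import Mathlib

section
/- Let H be a p×ν real matrix such that there exists μ ∈ ker H with all entries strictly positive. If Σ is a signature matrix such that the cone W_Σ = {r : ΣHr ≥ 0} has nonempty interior, then W_Σ intersects the open positive orthant ℝ₊^ν nontrivially; more precisely, the interior of W_Σ intersected with ℝ₊^ν is nonempty. -/
/-- a sign cone with nonempty interior meets the open positive
orthant in its interior. -/
theorem sign_cone_interior_meets_positive_orthant (p ν : ℕ)
    (H : Matrix (Fin p) (Fin ν) ℝ)
    (μ : Fin ν → ℝ) (hμpos : ∀ j, 0 < μ j) (hμker : H.mulVec μ = 0)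
    (σ : Fin p → ℝ) (hσ : ∀ i, σ i = 1 ∨ σ i = -1)
    (hint : (interior {r : Fin ν → ℝ | ∀ i, 0 ≤ σ i * (H.mulVec r i)}).Nonempty) :
    (interior {r : Fin ν → ℝ | ∀ i, 0 ≤ σ i * (H.mulVec r i)} ∩
      {r : Fin ν → ℝ | ∀ j, 0 < r j}).Nonempty := by
  set S : Set (Fin ν → ℝ) := {r : Fin ν → ℝ | ∀ i, 0 ≤ σ i * (H.mulVec r i)} with hS
  obtain ⟨r₀, hr₀⟩ := hint
  -- choose t large enough
  obtain ⟨t, ht⟩ : ∃ t : ℝ, ∀ j, 0 < r₀ j + t * μ j := by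
    obtain ⟨t, ht⟩ := Finset.exists_le (Finset.univ.image fun j => (1 - r₀ j) / μ j)
      |>.imp (fun t ht => ht)
    refine ⟨t, fun j => ?_⟩
    have h1 : (1 - r₀ j) / μ j ≤ t := ht _ (Finset.mem_image_of_mem _ (Finset.mem_univ j))
    have h2 : 1 - r₀ j ≤ t * μ j := (div_le_iff₀ (hμpos j)).mp h1
    linarith
  -- translation by t • μ preserves S
  have hpre : S = (fun x => x + t • μ) ⁻¹' S := by
    ext x
    simp only [Set.mem_preimage, hS, Set.mem_setOf_eq]
    have : H.mulVec (x + t • μ) = H.mulVec x := by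
      rw [Matrix.mulVec_add, Matrix.mulVec_smul, hμker, smul_zero, add_zero]
    rw [this]
  have hmem : r₀ + t • μ ∈ interior S := by
    have h := (Homeomorph.addRight (t • μ)).preimage_interior S
    -- h : (·+t•μ) ⁻¹' interior S = interior ((·+t•μ) ⁻¹' S)
    have : r₀ ∈ interior ((fun x => x + t • μ) ⁻¹' S) := by rw [← hpre]; exact hr₀
    have h2 : r₀ ∈ (fun x => x + t • μ) ⁻¹' interior S := by
      rw [show ((fun x => x + t • μ) : (Fin ν → ℝ) → _) = (Homeomorph.addRight (t • μ)) from rfl,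
        h]
      exact this
    exact h2
  exact ⟨r₀ + t • μ, hmem, fun j => by simpa using ht j⟩
end

section
/- Let h₁, h₂ ∈ ℝ^ν be nonzero vectors and Ĥ a matrix with rows in ℝ^ν such that there exists v ∈ ker Ĥ ∩ ker h₁ᵀ ∩ ker h₂ᵀ with v ≫ 0, h₁ and h₂ are not scalar multiples of each other, and the cones {r : Ĥr ≥ 0, h₁ᵀr ≥ 0, h₂ᵀr ≥ 0} and {r : Ĥr ≥ 0, −h₁ᵀr ≥ 0, −h₂ᵀr ≥ 0} both have nonempty interior. Then at least one of the cones {r : Ĥr ≥ 0, h₁ᵀr ≥ 0, −h₂ᵀr ≥ 0} or {r : Ĥr ≥ 0, −h₁ᵀr ≥ 0, h₂ᵀr ≥ 0} has nonempty interior. -/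
open Set Filter Topology

/-!
Let `U` be the interior of the cone `{r | Ĥ r ≥ 0}`: it is open and convex, and by hypothesis it
contains a point where `h₁ᵀr, h₂ᵀr ≥ 0` and one where `h₁ᵀr, h₂ᵀr ≤ 0`. Being connected, `U`
contains a point `z` with `(h₁ + h₂)ᵀz = 0`. Since `h₁, h₂` are independent there is a direction
`w` with `h₁ᵀw = 1` and `h₂ᵀw = -1`, and a small step from `z` along `w` (if `h₁ᵀz ≥ 0`) or `-w`
(otherwise) stays in `U` and makes `h₁ᵀr` and `h₂ᵀr` strictly of opposite signs, which puts it in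
the interior of one of the two mixed cones.
-/

theorem Module.Dual.exists_apply_ne_zero_and_eq_zero_of_linearIndependent {K E : Type*} [Field K]
    [AddCommGroup E] [Module K E] {f g : Module.Dual K E} (hfg : LinearIndependent K ![f, g]) :
    ∃ x, f x ≠ 0 ∧ g x = 0 := by
  by_contra! h
  have hf : f ∈ Submodule.span K (range fun _ : Unit ↦ g) :=
    mem_span_of_iInf_ker_le_ker fun x hx ↦ by_contra fun hfx ↦ h x hfx (by simpa using hx)
  obtain ⟨a, rfl⟩ := Submodule.mem_span_singleton.1 (by simpa using hf)
  exact (LinearIndependent.pair_iff' (hfg.ne_zero 1)).1 (LinearIndependent.pair_symm_iff.1 hfg) a rfl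

theorem Module.Dual.exists_apply_eq_of_linearIndependent {K E : Type*} [Field K]
    [AddCommGroup E] [Module K E] {f g : Module.Dual K E} (hfg : LinearIndependent K ![f, g])
    (a b : K) : ∃ w, f w = a ∧ g w = b := by
  obtain ⟨x, hfx, hgx⟩ := exists_apply_ne_zero_and_eq_zero_of_linearIndependent hfg
  obtain ⟨u, hgu⟩ : ∃ u, g u ≠ 0 := DFunLike.ne_iff.1 (hfg.ne_zero 1)
  refine ⟨((a - b * f u / g u) / f x) • x + (b / g u) • u, ?_, ?_⟩
  · simp only [map_add, map_smul, smul_eq_mul]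
    field_simp
    ring
  · simp only [map_add, map_smul, smul_eq_mul, hgx]
    field_simp
    ring

theorem mem_interior_setOf_nonneg_of_pos {E : Type*} [AddCommGroup E] [Module ℝ E]
    [TopologicalSpace E] {C : Set E} {f g : E →L[ℝ] ℝ} {x : E}
    (hx : x ∈ interior C) (hfx : 0 < f x) (hgx : 0 < g x) :
    x ∈ interior {y | y ∈ C ∧ 0 ≤ f y ∧ 0 ≤ g y} := by
  rw [mem_interior_iff_mem_nhds] at hx ⊢
  filter_upwards [hx, (isOpen_lt continuous_const f.continuous).mem_nhds hfx,
    (isOpen_lt continuous_const g.continuous).mem_nhds hgx] with y hyC hfy hgy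
  exact ⟨hyC, hfy.le, hgy.le⟩

section

variable {E : Type*} [AddCommGroup E] [Module ℝ E] [TopologicalSpace E]
  [IsTopologicalAddGroup E] [ContinuousSMul ℝ E]

theorem IsOpen.exists_pos_add_smul_mem {U : Set E} (hU : IsOpen U) {z : E} (hz : z ∈ U) (d : E) :
    ∃ ε : ℝ, 0 < ε ∧ z + ε • d ∈ U := by
  have : ∀ᶠ t : ℝ in 𝓝[>] 0, z + t • d ∈ U :=
    nhdsWithin_le_nhds ((Continuous.tendsto' (by fun_prop) 0 z (by simp)).eventually
      (hU.mem_nhds hz))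
  obtain ⟨ε, hεU, hε⟩ := (this.and self_mem_nhdsWithin).exists
  exact ⟨ε, hε, hεU⟩

theorem Convex.interior_mixed_sign_nonempty {C : Set E} (hC : Convex ℝ C) {f g : E →L[ℝ] ℝ}
    (hfg : LinearIndependent ℝ ![f, g])
    (hpos : (interior {x | x ∈ C ∧ 0 ≤ f x ∧ 0 ≤ g x}).Nonempty)
    (hneg : (interior {x | x ∈ C ∧ 0 ≤ -f x ∧ 0 ≤ -g x}).Nonempty) :
    (interior {x | x ∈ C ∧ 0 ≤ f x ∧ 0 ≤ -g x}).Nonempty ∨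
      (interior {x | x ∈ C ∧ 0 ≤ -f x ∧ 0 ≤ g x}).Nonempty := by
  obtain ⟨x, hx⟩ := hpos
  obtain ⟨y, hy⟩ := hneg
  have hxC : x ∈ interior C := interior_mono (fun _ h ↦ h.1) hx
  have hyC : y ∈ interior C := interior_mono (fun _ h ↦ h.1) hy
  have hfgx := (interior_subset hx).2
  have hfgy := (interior_subset hy).2
  obtain ⟨z, hzC, hz⟩ : (0 : ℝ) ∈ (f + g) '' interior C :=
    hC.interior.isPreconnected.intermediate_value hyC hxC (f + g).continuous.continuousOn
      ⟨by simp; linarith, by simp; linarith⟩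
  have hfg' : LinearIndependent ℝ ![(f : E →ₗ[ℝ] ℝ), g] := by
    rw [LinearIndependent.pair_iff] at hfg ⊢
    exact fun s t h ↦ hfg s t (ContinuousLinearMap.coe_injective (by simpa using h))
  obtain ⟨w, hfw, hgw⟩ := Module.Dual.exists_apply_eq_of_linearIndependent hfg' 1 (-1)
  simp only [ContinuousLinearMap.coe_coe] at hfw hgw
  replace hz : f z + g z = 0 := hz
  rcases le_or_gt 0 (f z) with hfz | hfz
  · obtain ⟨ε, hε, hmem⟩ := isOpen_interior.exists_pos_add_smul_mem hzC w
    refine .inl ⟨_, mem_interior_setOf_nonneg_of_pos (g := -g) hmem ?_ ?_⟩ <;>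
      simp [hfw, hgw] <;> linarith
  · obtain ⟨ε, hε, hmem⟩ := isOpen_interior.exists_pos_add_smul_mem hzC (-w)
    refine .inr ⟨_, mem_interior_setOf_nonneg_of_pos (f := -f) hmem ?_ ?_⟩ <;>
      simp [hfw, hgw] <;> linarith

end

theorem neighbor_chain_base_case_general (m ν : ℕ) (Hhat : Matrix (Fin m) (Fin ν) ℝ)
    (h₁ h₂ : Fin ν → ℝ) (h₂ne : h₂ ≠ 0)
    (hindep : ∀ t : ℝ, h₁ ≠ t • h₂)
    (hint₁ : (interior {r : Fin ν → ℝ | (∀ i, 0 ≤ Hhat.mulVec r i) ∧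
        0 ≤ ∑ j, h₁ j * r j ∧ 0 ≤ ∑ j, h₂ j * r j}).Nonempty)
    (hint₂ : (interior {r : Fin ν → ℝ | (∀ i, 0 ≤ Hhat.mulVec r i) ∧
        0 ≤ -∑ j, h₁ j * r j ∧ 0 ≤ -∑ j, h₂ j * r j}).Nonempty) :
    (interior {r : Fin ν → ℝ | (∀ i, 0 ≤ Hhat.mulVec r i) ∧
        0 ≤ ∑ j, h₁ j * r j ∧ 0 ≤ -∑ j, h₂ j * r j}).Nonempty ∨
    (interior {r : Fin ν → ℝ | (∀ i, 0 ≤ Hhat.mulVec r i) ∧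
        0 ≤ -∑ j, h₁ j * r j ∧ 0 ≤ ∑ j, h₂ j * r j}).Nonempty := by
  let dual : (Fin ν → ℝ) ≃ₗ[ℝ] StrongDual ℝ (Fin ν → ℝ) :=
    (dotProductEquiv ℝ (Fin ν)).trans LinearMap.toContinuousLinearMap
  have hindep' : LinearIndependent ℝ ![dual h₁, dual h₂] := by
    rw [LinearIndependent.pair_symm_iff, LinearIndependent.pair_iff' (by simpa using h₂ne)]
    exact fun t h ↦ hindep t (dual.injective (by simpa using h.symm))
  exact ((convex_Ici 0).linear_preimage Hhat.mulVecLin).interior_mixed_sign_nonempty hindep'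
    hint₁ hint₂

/-- base case of the neighbor-chain lemma. -/
theorem neighbor_chain_base_case (m ν : ℕ) (Hhat : Matrix (Fin m) (Fin ν) ℝ)
    (h₁ h₂ : Fin ν → ℝ) (h₁ne : h₁ ≠ 0) (h₂ne : h₂ ≠ 0)
    (v : Fin ν → ℝ) (hvpos : ∀ j, 0 < v j) (hvker : Hhat.mulVec v = 0)
    (hv₁ : ∑ j, h₁ j * v j = 0) (hv₂ : ∑ j, h₂ j * v j = 0)
    (hindep : ∀ t : ℝ, h₁ ≠ t • h₂)
    (hint₁ : (interior {r : Fin ν → ℝ | (∀ i, 0 ≤ Hhat.mulVec r i) ∧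
        0 ≤ ∑ j, h₁ j * r j ∧ 0 ≤ ∑ j, h₂ j * r j}).Nonempty)
    (hint₂ : (interior {r : Fin ν → ℝ | (∀ i, 0 ≤ Hhat.mulVec r i) ∧
        0 ≤ -∑ j, h₁ j * r j ∧ 0 ≤ -∑ j, h₂ j * r j}).Nonempty) :
    (interior {r : Fin ν → ℝ | (∀ i, 0 ≤ Hhat.mulVec r i) ∧
        0 ≤ ∑ j, h₁ j * r j ∧ 0 ≤ -∑ j, h₂ j * r j}).Nonempty ∨
    (interior {r : Fin ν → ℝ | (∀ i, 0 ≤ Hhat.mulVec r i) ∧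
        0 ≤ -∑ j, h₁ j * r j ∧ 0 ≤ ∑ j, h₂ j * r j}).Nonempty :=
  neighbor_chain_base_case_general m ν Hhat h₁ h₂ h₂ne hindep hint₁ hint₂
end

section
/- (Hamming-distance chain between sign cones) Let H̃ be a matrix with pairwise linearly independent rows such that there exists v ∈ ker H̃ with v ≫ 0. Define for each signature matrix Σ the cone W_Σ = {r : ΣH̃r ≥ 0}, and let W_k, W_j be two such cones with nonempty interior whose signature matrices differ in N > 1 diagonal entries (Hamming distance N). Then there exists a cone W_ℓ with nonempty interior, ℓ ≠ k, j, such that the Hamming distance from W_k's signature to W_ℓ's signature plus the Hamming distance from W_ℓ's signature to W_j's signature equals N. -/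
open scoped Classical

/-!
Pick interior points `r` of `W_k` and `r'` of `W_j` and walk along the segment from `r` to `r'`.
The sign of `(H̃ x)_i` stays fixed for the rows where the two signatures agree, and flips exactly
once, at a time `t_i ∈ (0, 1)`, for each of the `N` rows where they differ. Moving `r` inside the
open cone `W_k` makes two of these crossing times distinct, because the corresponding rows of `H̃`
are not proportional. Stopping the walk strictly between two crossing times, at a time that is no
crossing time, gives a point off every wall, hence an interior point of a cone `W_ℓ` whose
signature agrees with `σ_j` on the rows already crossed and with `σ_k` elsewhere.
-/

open Matrix

theorem hammingDist_add_hammingDist_of_forall_eq_or_eq {ι β : Type*} [Fintype ι]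
    [DecidableEq β] {x y z : ι → β} (h : ∀ i, y i = x i ∨ y i = z i) :
    hammingDist x y + hammingDist y z = hammingDist x z := by
  simp only [hammingDist]
  rw [← Finset.card_union_of_disjoint]
  · congr 1
    ext i
    simp only [Finset.mem_union, Finset.mem_filter, Finset.mem_univ, true_and]
    rcases h i with h | h <;> rw [h] <;> tauto
  · rw [Finset.disjoint_filter]
    rintro i - hxy hyz
    rcases h i with h | h <;> simp_all

theorem ne_zero_of_forall_ne_smul {ι R M : Type*} [Nontrivial ι] [Zero R] [Zero M]
    [SMulWithZero R M] {v : ι → M} (h : ∀ i i', i ≠ i' → ∀ t : R, v i ≠ t • v i') (i : ι) :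
    v i ≠ 0 := fun h₀ =>
  have ⟨i', hi'⟩ := exists_ne i
  h i i' hi'.symm 0 (by rw [h₀, zero_smul])

theorem div_sub_mem_Ioo_of_mul_neg {K : Type*} [Field K] [LinearOrder K] [IsStrictOrderedRing K]
    {y z : K} (h : y * z < 0) : y / (y - z) ∈ Set.Ioo 0 1 := by
  rcases (left_ne_zero_of_mul h.ne).lt_or_gt with hy | hy
  · have hz : 0 < z := pos_of_mul_neg_right h hy.le
    exact ⟨div_pos_of_neg_of_neg hy (by linarith),
      (div_lt_one_of_neg (by linarith)).mpr (by linarith)⟩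
  · have hz : z < 0 := neg_of_mul_neg_right h hy.le
    exact ⟨div_pos hy (by linarith), (div_lt_one (by linarith)).mpr (by linarith)⟩

namespace Real

variable {y z s : ℝ}

theorem sign_eq_of_mul_pos {σ x : ℝ} (hσ : σ = 1 ∨ σ = -1) (h : 0 < σ * x) :
    Real.sign x = σ := by
  rcases hσ with rfl | rfl
  · exact sign_of_pos (by linarith)
  · exact sign_of_neg (by linarith)

theorem mul_neg_iff_sign_ne (hy : y ≠ 0) (hz : z ≠ 0) :
    y * z < 0 ↔ Real.sign y ≠ Real.sign z := by
  rcases hy.lt_or_gt with hy | hy <;> rcases hz.lt_or_gt with hz | hz <;>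
    simp [sign_of_pos, sign_of_neg, hy, hz, mul_pos_of_neg_of_neg, mul_neg_of_neg_of_pos,
      mul_neg_of_pos_of_neg, le_of_lt] <;> norm_num

theorem sign_one_sub_mul_add_mul_of_mul_pos (h : 0 < y * z) (hs₀ : 0 ≤ s) (hs₁ : s ≤ 1) :
    Real.sign ((1 - s) * y + s * z) = Real.sign y := by
  rcases (left_ne_zero_of_mul h.ne').lt_or_gt with hy | hy
  · have hz : z < 0 := neg_of_mul_pos_right h hy.le
    have : (1 - s) * y + s * z ≤ max y z := by
      nlinarith [le_max_left y z, le_max_right y z]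
    rw [sign_of_neg hy, sign_of_neg (this.trans_lt (max_lt hy hz))]
  · have hz : 0 < z := pos_of_mul_pos_right h hy.le
    have : min y z ≤ (1 - s) * y + s * z := by
      nlinarith [min_le_left y z, min_le_right y z]
    rw [sign_of_pos hy, sign_of_pos ((lt_min hy hz).trans_le this)]

theorem sign_one_sub_mul_add_mul_of_lt_div (h : y * z < 0) (hs : s < y / (y - z)) :
    Real.sign ((1 - s) * y + s * z) = Real.sign y := by
  rcases (left_ne_zero_of_mul h.ne).lt_or_gt with hy | hy
  · have hz : 0 < z := pos_of_mul_neg_right h hy.le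
    rw [lt_div_iff_of_neg (by linarith)] at hs
    rw [sign_of_neg hy, sign_of_neg (by linarith)]
  · have hz : z < 0 := neg_of_mul_neg_right h hy.le
    rw [lt_div_iff₀ (by linarith)] at hs
    rw [sign_of_pos hy, sign_of_pos (by linarith)]

theorem sign_one_sub_mul_add_mul_of_div_lt (h : y * z < 0) (hs : y / (y - z) < s) :
    Real.sign ((1 - s) * y + s * z) = Real.sign z := by
  rcases (left_ne_zero_of_mul h.ne).lt_or_gt with hy | hy
  · have hz : 0 < z := pos_of_mul_neg_right h hy.le
    rw [div_lt_iff_of_neg (by linarith)] at hs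
    rw [sign_of_pos hz, sign_of_pos (by linarith)]
  · have hz : z < 0 := neg_of_mul_neg_right h hy.le
    rw [div_lt_iff₀ (by linarith)] at hs
    rw [sign_of_neg hz, sign_of_neg (by linarith)]

end Real

/-- The `i`-th coordinate of `(1 - s) • y + s • z` changes sign at `s = y i / (y i - z i)`; if
`i₁` and `i₂` cross at different times, stopping strictly between them flips some, but not all,
of the coordinates where `y` and `z` differ in sign. -/
theorem exists_sign_strictly_between {m : Type*} [Fintype m] {y z : m → ℝ}
    (hy : ∀ i, y i ≠ 0) (hz : ∀ i, z i ≠ 0) {i₁ i₂ : m} (h₁ : y i₁ * z i₁ < 0)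
    (h₂ : y i₂ * z i₂ < 0) (h₁₂ : y i₁ * z i₂ ≠ y i₂ * z i₁) :
    ∃ s : ℝ, let w := (1 - s) • y + s • z
      (∀ i, w i ≠ 0) ∧ (∀ i, Real.sign (w i) = Real.sign (y i) ∨ Real.sign (w i) = Real.sign (z i)) ∧
        Real.sign ∘ w ≠ Real.sign ∘ y ∧ Real.sign ∘ w ≠ Real.sign ∘ z := by
  set t : m → ℝ := fun i => y i / (y i - z i)
  have ht : ∀ {i}, y i * z i < 0 → t i ∈ Set.Ioo 0 1 := div_sub_mem_Ioo_of_mul_neg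
  have ht₁₂ : t i₁ ≠ t i₂ := by
    intro h
    rw [div_eq_div_iff (sub_ne_zero.mpr fun e => by nlinarith [e ▸ h₁])
      (sub_ne_zero.mpr fun e => by nlinarith [e ▸ h₂])] at h
    exact h₁₂ (by linarith)
  obtain ⟨s, ⟨hs_lo, hs_hi⟩, hs_t⟩ :=
    (Set.Ioo_infinite (min_lt_max.mpr ht₁₂)).exists_notMem_finset (Finset.univ.image t)
  have hs₀ : 0 < s := (lt_min (ht h₁).1 (ht h₂).1).trans hs_lo
  have hs₁ : s < 1 := hs_hi.trans (max_lt (ht h₁).2 (ht h₂).2)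
  have hst : ∀ i, t i ≠ s := fun i h => hs_t (Finset.mem_image.mpr ⟨i, Finset.mem_univ _, h⟩)
  have hbetween : ∀ i, Real.sign ((1 - s) * y i + s * z i) = Real.sign (y i) ∨
      Real.sign ((1 - s) * y i + s * z i) = Real.sign (z i) := fun i => by
    rcases (mul_ne_zero (hy i) (hz i)).lt_or_gt with hyz | hyz
    · rcases (hst i).lt_or_gt with hlt | hlt
      · exact .inr (Real.sign_one_sub_mul_add_mul_of_div_lt hyz hlt)
      · exact .inl (Real.sign_one_sub_mul_add_mul_of_lt_div hyz hlt)
    · exact .inl (Real.sign_one_sub_mul_add_mul_of_mul_pos hyz hs₀.le hs₁.le)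
  refine ⟨s, fun i h => ?_, hbetween, fun h => ?_, fun h => ?_⟩
  · rcases hbetween i with e | e <;>
      rw [show (1 - s) * y i + s * z i = 0 from h, Real.sign_zero, eq_comm,
        Real.sign_eq_zero_iff] at e
    exacts [hy i e, hz i e]
  · obtain ⟨i, hi, hti⟩ : ∃ i, y i * z i < 0 ∧ t i < s := by
      rcases min_lt_iff.mp hs_lo with h | h
      exacts [⟨i₁, h₁, h⟩, ⟨i₂, h₂, h⟩]
    exact (Real.mul_neg_iff_sign_ne (hy i) (hz i)).mp hi
      ((Real.sign_one_sub_mul_add_mul_of_div_lt hi hti).symm.trans (congrFun h i)).symm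
  · obtain ⟨i, hi, hti⟩ : ∃ i, y i * z i < 0 ∧ s < t i := by
      rcases lt_max_iff.mp hs_hi with h | h
      exacts [⟨i₁, h₁, h⟩, ⟨i₂, h₂, h⟩]
    exact (Real.mul_neg_iff_sign_ne (hy i) (hz i)).mp hi
      ((Real.sign_one_sub_mul_add_mul_of_lt_div hi hti).symm.trans (congrFun h i))

section

variable {m n : Type*} [Fintype n]

theorem interior_setOf_nonneg_dotProduct {w : n → ℝ} (hw : w ≠ 0) :
    interior {r | 0 ≤ w ⬝ᵥ r} = {r | 0 < w ⬝ᵥ r} := by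
  let f : (n → ℝ) →ₗ[ℝ] ℝ := dotProductBilin ℝ ℝ w
  have hww : w ⬝ᵥ w ≠ 0 := fun h => hw (dotProduct_self_eq_zero.mp h)
  have hf : Function.Surjective f := fun c => ⟨(c / (w ⬝ᵥ w)) • w, by simp [f, hww]⟩
  have := (f.isOpenMap_of_finiteDimensional hf).preimage_interior_eq_interior_preimage
    (LinearMap.continuous_of_finiteDimensional f) (Set.Ici 0)
  rw [interior_Ici] at this
  exact this.symm

theorem exists_mem_dotProduct_ne_zero {U : Set (n → ℝ)} (hU : IsOpen U) (hne : U.Nonempty)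
    {w : n → ℝ} (hw : w ≠ 0) : ∃ r ∈ U, w ⬝ᵥ r ≠ 0 := by
  by_contra! h
  have htop := (LinearMap.ker (dotProductBilin ℝ ℝ w)).eq_top_of_nonempty_interior'
    (hne.mono (interior_maximal (fun r hr => by simpa using h r hr) hU))
  have hker : w ∈ LinearMap.ker (dotProductBilin ℝ ℝ w) := htop ▸ Submodule.mem_top
  exact hw (dotProduct_self_eq_zero.mp (by simpa using hker))

theorem Matrix.exists_mem_mulVec_mul_ne {U : Set (n → ℝ)} (hU : IsOpen U) (hne : U.Nonempty)
    {H : Matrix m n ℝ} {i₁ i₂ : m} (hH : ∀ c : ℝ, H i₁ ≠ c • H i₂) {z : m → ℝ}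
    (hz : z i₂ ≠ 0) : ∃ r ∈ U, (H *ᵥ r) i₁ * z i₂ ≠ (H *ᵥ r) i₂ * z i₁ := by
  have hw : z i₂ • H i₁ - z i₁ • H i₂ ≠ 0 := by
    intro h
    apply hH (z i₁ / z i₂)
    rw [sub_eq_zero] at h
    rw [div_eq_inv_mul, mul_smul, ← h, smul_smul, inv_mul_cancel₀ hz, one_smul]
  obtain ⟨r, hrU, hr⟩ := exists_mem_dotProduct_ne_zero hU hne hw
  refine ⟨r, hrU, fun h => hr ?_⟩
  simp only [sub_dotProduct, smul_dotProduct, smul_eq_mul]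
  change z i₂ * (H *ᵥ r) i₁ - z i₁ * (H *ᵥ r) i₂ = 0
  linarith

def signCone (H : Matrix m n ℝ) (σ : m → ℝ) : Set (n → ℝ) :=
  {r | ∀ i, 0 ≤ σ i * (H *ᵥ r) i}

theorem interior_signCone [Finite m] {H : Matrix m n ℝ} {σ : m → ℝ} (hσ : ∀ i, σ i ≠ 0)
    (hH : ∀ i, H i ≠ 0) : interior (signCone H σ) = {r | ∀ i, 0 < σ i * (H *ᵥ r) i} := by
  have hcone : signCone H σ = ⋂ i, {r | 0 ≤ (σ i • H i) ⬝ᵥ r} := by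
    ext r
    simp [signCone, smul_dotProduct, mulVec]
  rw [hcone, interior_iInter_of_finite,
    Set.iInter_congr fun i => interior_setOf_nonneg_dotProduct (smul_ne_zero (hσ i) (hH i))]
  ext r
  simp [smul_dotProduct, mulVec]

theorem mem_interior_signCone_iff [Finite m] {H : Matrix m n ℝ} {σ : m → ℝ}
    (hσ : ∀ i, σ i = 1 ∨ σ i = -1) (hH : ∀ i, H i ≠ 0) {r : n → ℝ} :
    r ∈ interior (signCone H σ) ↔ (∀ i, (H *ᵥ r) i ≠ 0) ∧ Real.sign ∘ (H *ᵥ r) = σ := by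
  rw [interior_signCone (fun i => by rcases hσ i with h | h <;> simp [h]) hH]
  constructor
  · intro h
    exact ⟨fun i => right_ne_zero_of_mul (h i).ne',
      funext fun i => Real.sign_eq_of_mul_pos (hσ i) (h i)⟩
  · rintro ⟨h₀, rfl⟩ i
    exact Real.sign_mul_pos_of_ne_zero _ (h₀ i)

end

theorem hamming_chain_between_sign_cones_general (p ν : ℕ)
    (H : Matrix (Fin p) (Fin ν) ℝ)
    (hindep : ∀ i i' : Fin p, i ≠ i' → ∀ t : ℝ, H i ≠ t • H i')
    (σk σj : Fin p → ℝ)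
    (hσk : ∀ i, σk i = 1 ∨ σk i = -1) (hσj : ∀ i, σj i = 1 ∨ σj i = -1)
    (hintk : (interior {r : Fin ν → ℝ | ∀ i, 0 ≤ σk i * (H.mulVec r i)}).Nonempty)
    (hintj : (interior {r : Fin ν → ℝ | ∀ i, 0 ≤ σj i * (H.mulVec r i)}).Nonempty)
    (N : ℕ) (hN : 1 < N)
    (hdist : (Finset.univ.filter (fun i => σk i ≠ σj i)).card = N) :
    ∃ σℓ : Fin p → ℝ, (∀ i, σℓ i = 1 ∨ σℓ i = -1) ∧ σℓ ≠ σk ∧ σℓ ≠ σj ∧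
      (interior {r : Fin ν → ℝ | ∀ i, 0 ≤ σℓ i * (H.mulVec r i)}).Nonempty ∧
      (Finset.univ.filter (fun i => σk i ≠ σℓ i)).card +
        (Finset.univ.filter (fun i => σℓ i ≠ σj i)).card = N := by
  obtain ⟨i₁, hi₁, i₂, hi₂, h₁₂⟩ := Finset.one_lt_card.mp (hdist ▸ hN)
  simp only [Finset.mem_filter, Finset.mem_univ, true_and] at hi₁ hi₂
  have : Nontrivial (Fin p) := ⟨i₁, i₂, h₁₂⟩
  have hrow := ne_zero_of_forall_ne_smul hindep
  obtain ⟨rj, hrj⟩ := hintj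
  obtain ⟨hz, rfl⟩ := (mem_interior_signCone_iff hσj hrow).mp hrj
  obtain ⟨r, hr, hgen⟩ :=
    Matrix.exists_mem_mulVec_mul_ne isOpen_interior hintk (hindep i₁ i₂ h₁₂) (hz i₂)
  obtain ⟨hy, rfl⟩ := (mem_interior_signCone_iff hσk hrow).mp hr
  obtain ⟨s, hw₀, hbetween, hne_k, hne_j⟩ := exists_sign_strictly_between hy hz
    ((Real.mul_neg_iff_sign_ne (hy i₁) (hz i₁)).mpr hi₁)
    ((Real.mul_neg_iff_sign_ne (hy i₂) (hz i₂)).mpr hi₂) hgen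
  have hw : H *ᵥ ((1 - s) • r + s • rj) = (1 - s) • H *ᵥ r + s • H *ᵥ rj := by
    rw [mulVec_add, mulVec_smul, mulVec_smul]
  have hℓ := fun i => (Real.sign_apply_eq_of_ne_zero _ (hw₀ i)).symm
  refine ⟨_, hℓ, hne_k, hne_j, ⟨(1 - s) • r + s • rj, ?_⟩,
    (hammingDist_add_hammingDist_of_forall_eq_or_eq hbetween).trans hdist⟩
  exact (mem_interior_signCone_iff hℓ hrow).mpr (by rw [hw]; exact ⟨hw₀, rfl⟩)

/-- Hamming-distance chain between nonempty-interior sign cones. -/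
theorem hamming_chain_between_sign_cones (p ν : ℕ)
    (H : Matrix (Fin p) (Fin ν) ℝ)
    (hindep : ∀ i i' : Fin p, i ≠ i' → ∀ t : ℝ, H i ≠ t • H i')
    (v : Fin ν → ℝ) (hvpos : ∀ j, 0 < v j) (hvker : H.mulVec v = 0)
    (σk σj : Fin p → ℝ)
    (hσk : ∀ i, σk i = 1 ∨ σk i = -1) (hσj : ∀ i, σj i = 1 ∨ σj i = -1)
    (hintk : (interior {r : Fin ν → ℝ | ∀ i, 0 ≤ σk i * (H.mulVec r i)}).Nonempty)
    (hintj : (interior {r : Fin ν → ℝ | ∀ i, 0 ≤ σj i * (H.mulVec r i)}).Nonempty)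
    (N : ℕ) (hN : 1 < N)
    (hdist : (Finset.univ.filter (fun i => σk i ≠ σj i)).card = N) :
    ∃ σℓ : Fin p → ℝ, (∀ i, σℓ i = 1 ∨ σℓ i = -1) ∧ σℓ ≠ σk ∧ σℓ ≠ σj ∧
      (interior {r : Fin ν → ℝ | ∀ i, 0 ≤ σℓ i * (H.mulVec r i)}).Nonempty ∧
      (Finset.univ.filter (fun i => σk i ≠ σℓ i)).card +
        (Finset.univ.filter (fun i => σℓ i ≠ σj i)).card = N :=
  hamming_chain_between_sign_cones_general p ν H hindep σk σj hσk hσj hintk hintj N hN hdist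
end

section
/- (Empty-interior cone subsumption) Let H ∈ ℝ^{p×ν} and Σ_k a signature matrix such that the cone W_k = {r : Σ_k H r ≥ 0} has empty interior. Then there exists a signature matrix Σ_j such that the cone W_j = {r : Σ_j H r ≥ 0} has nonempty interior and W_k ⊆ W_j. -/
lemma exists_avoid (p ν : ℕ) (H : Matrix (Fin p) (Fin ν) ℝ) (hrow : ∀ i, H i ≠ 0) :
    ∃ g : Fin ν → ℝ, ∀ i, H.mulVec g i ≠ 0 := by
  by_contra h
  push_neg at h
  have hcov : ⋃ i, ((LinearMap.ker ((LinearMap.proj i : ((Fin p → ℝ) →ₗ[ℝ] ℝ)) ∘ₗ H.mulVecLin) : Subspace ℝ (Fin ν → ℝ)) : Set (Fin ν → ℝ)) = Set.univ := by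
    ext r; simp only [Set.mem_iUnion, Set.mem_univ, iff_true]
    obtain ⟨i, hi⟩ := h r
    exact ⟨i, by simpa [LinearMap.mem_ker] using hi⟩
  obtain ⟨i, hi⟩ := Subspace.exists_eq_top_of_iUnion_eq_univ hcov
  rw [LinearMap.ker_eq_top] at hi
  apply hrow i
  funext j
  have := congrArg (fun f => f (Pi.single j 1)) hi
  simpa [Matrix.mulVec_single] using this

/-- an empty-interior sign cone is contained in some
nonempty-interior sign cone. -/
theorem empty_interior_cone_subsumed (p ν : ℕ) (H : Matrix (Fin p) (Fin ν) ℝ)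
    (hrow : ∀ i, H i ≠ 0)
    (σk : Fin p → ℝ) (hσk : ∀ i, σk i = 1 ∨ σk i = -1)
    (hempty : interior {r : Fin ν → ℝ | ∀ i, 0 ≤ σk i * (H.mulVec r i)} = ∅) :
    ∃ σj : Fin p → ℝ, (∀ i, σj i = 1 ∨ σj i = -1) ∧
      (interior {r : Fin ν → ℝ | ∀ i, 0 ≤ σj i * (H.mulVec r i)}).Nonempty ∧
      {r : Fin ν → ℝ | ∀ i, 0 ≤ σk i * (H.mulVec r i)} ⊆
        {r : Fin ν → ℝ | ∀ i, 0 ≤ σj i * (H.mulVec r i)} := by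
  classical
  set W : Set (Fin ν → ℝ) := {r | ∀ i, 0 ≤ σk i * (H.mulVec r i)} with hW
  -- continuity of each coordinate map
  have hcont : ∀ i : Fin p, Continuous fun r : Fin ν → ℝ => H.mulVec r i := by
    intro i
    exact (LinearMap.continuous_of_finiteDimensional
      ((LinearMap.proj i : ((Fin p → ℝ) →ₗ[ℝ] ℝ)) ∘ₗ H.mulVecLin))
  -- the predicate P
  set P : Fin p → Prop := fun i => ∃ r ∈ W, 0 < σk i * H.mulVec r i with hP
  -- choose witnesses
  have hchoice : ∀ i, ∃ r, r ∈ W ∧ (P i → 0 < σk i * H.mulVec r i) := by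
    intro i
    by_cases hi : P i
    · obtain ⟨r, hr, hr'⟩ := hi
      exact ⟨r, hr, fun _ => hr'⟩
    · refine ⟨0, ?_, fun h => absurd h hi⟩
      intro j; simp [Matrix.mulVec_zero]
  choose rf hrfW hrfP using hchoice
  set rbar : Fin ν → ℝ := ∑ i : Fin p, rf i with hrbar
  have hmulbar : ∀ i, H.mulVec rbar i = ∑ j : Fin p, H.mulVec (rf j) i := by
    intro i
    have : H.mulVec rbar = ∑ j : Fin p, H.mulVec (rf j) := by
      simp only [hrbar]
      rw [show (H.mulVec (∑ i : Fin p, rf i)) = H.mulVecLin (∑ i : Fin p, rf i) from rfl,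
        map_sum]
      rfl
    rw [this, Finset.sum_apply]
  have hrbarW : rbar ∈ W := by
    intro i
    rw [hmulbar, Finset.mul_sum]
    exact Finset.sum_nonneg fun j _ => hrfW j i
  have hrbarP : ∀ i, P i → 0 < σk i * H.mulVec rbar i := by
    intro i hi
    rw [hmulbar, Finset.mul_sum]
    exact Finset.sum_pos' (fun j _ => hrfW j i) ⟨i, Finset.mem_univ i, hrfP i hi⟩
  -- for ¬ P i, mulVec vanishes on W
  have hzero : ∀ i, ¬ P i → ∀ r ∈ W, H.mulVec r i = 0 := by
    intro i hi r hr
    have h1 : 0 ≤ σk i * H.mulVec r i := hr i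
    have h2 : ¬ 0 < σk i * H.mulVec r i := fun h => hi ⟨r, hr, h⟩
    have h3 : σk i * H.mulVec r i = 0 := le_antisymm (not_lt.1 h2) h1
    have hσ : σk i ≠ 0 := by rcases hσk i with h | h <;> simp [h]
    exact (mul_eq_zero.1 h3).resolve_left hσ
  -- generic direction
  obtain ⟨g, hg⟩ := exists_avoid p ν H hrow
  -- open set U
  set U : Set (Fin ν → ℝ) := {r | ∀ i, P i → 0 < σk i * H.mulVec r i} with hU
  have hUopen : IsOpen U := by
    have : U = ⋂ i : Fin p, {r | P i → 0 < σk i * H.mulVec r i} := by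
      ext r; simp [hU, Set.mem_iInter]
    rw [this]
    refine isOpen_iInter_of_finite fun i => ?_
    by_cases hi : P i
    · have : {r : Fin ν → ℝ | P i → 0 < σk i * H.mulVec r i}
          = (fun r => σk i * H.mulVec r i) ⁻¹' Set.Ioi 0 := by
        ext r; simp [hi]
      rw [this]
      exact (continuous_const.mul (hcont i)).isOpen_preimage _ isOpen_Ioi
    · have : {r : Fin ν → ℝ | P i → 0 < σk i * H.mulVec r i} = Set.univ := by
        ext r; simp [hi]
      rw [this]; exact isOpen_univ
  have hrbarU : rbar ∈ U := fun i hi => hrbarP i hi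
  -- find small positive ε
  have htend : Filter.Tendsto (fun ε : ℝ => rbar + ε • g) (nhds 0) (nhds rbar) := by
    have : Continuous fun ε : ℝ => rbar + ε • g :=
      continuous_const.add (continuous_id.smul continuous_const)
    have h0 : rbar + (0:ℝ) • g = rbar := by simp
    simpa [h0] using this.tendsto 0
  have hev : ∀ᶠ ε : ℝ in nhds 0, rbar + ε • g ∈ U := htend.eventually (hUopen.mem_nhds hrbarU)
  have hev' : ∀ᶠ ε : ℝ in nhdsWithin 0 (Set.Ioi 0), rbar + ε • g ∈ U ∧ 0 < ε := by
    have h1 : ∀ᶠ ε : ℝ in nhdsWithin 0 (Set.Ioi 0), rbar + ε • g ∈ U :=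
      nhdsWithin_le_nhds hev
    exact h1.and (eventually_nhdsWithin_of_forall fun x hx => hx)
  obtain ⟨ε, hεU, hεpos⟩ := hev'.exists
  set r' : Fin ν → ℝ := rbar + ε • g with hr'
  have hmulr' : ∀ i, H.mulVec r' i = H.mulVec rbar i + ε * H.mulVec g i := by
    intro i
    simp [hr', Matrix.mulVec_add, Matrix.mulVec_smul, smul_eq_mul]
  -- r' has all coords nonzero
  have hne : ∀ i, H.mulVec r' i ≠ 0 := by
    intro i
    by_cases hi : P i
    · have := hεU i hi
      intro h0
      rw [h0, mul_zero] at this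
      exact lt_irrefl 0 this
    · rw [hmulr' i, hzero i hi rbar hrbarW, zero_add]
      exact mul_ne_zero (ne_of_gt hεpos) (hg i)
  -- define σj
  set σj : Fin p → ℝ := fun i => if 0 < H.mulVec r' i then 1 else -1 with hσj
  have hσj1 : ∀ i, σj i = 1 ∨ σj i = -1 := by
    intro i; by_cases h : 0 < H.mulVec r' i <;> simp [hσj, h]
  have hσjpos : ∀ i, 0 < σj i * H.mulVec r' i := by
    intro i
    by_cases h : 0 < H.mulVec r' i
    · simpa [hσj, h] using h
    · have : H.mulVec r' i < 0 := lt_of_le_of_ne (not_lt.1 h) (hne i)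
      simp only [hσj, h, if_false]
      rw [neg_one_mul]
      exact neg_pos.2 this
  -- σj agrees with σk on P
  have hagree : ∀ i, P i → σj i = σk i := by
    intro i hi
    have h1 := hεU i hi
    have h2 := hσjpos i
    rcases hσk i with hk | hk <;> rcases hσj1 i with hj | hj <;>
      rw [hk] at h1 <;> rw [hj] at h2 <;> [skip; linarith; linarith; skip] <;> rw [hj, hk]
  refine ⟨σj, hσj1, ⟨r', ?_⟩, ?_⟩
  · -- interior nonempty
    have hopen : IsOpen {r : Fin ν → ℝ | ∀ i, 0 < σj i * H.mulVec r i} := by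
      have : {r : Fin ν → ℝ | ∀ i, 0 < σj i * H.mulVec r i}
          = ⋂ i : Fin p, (fun r => σj i * H.mulVec r i) ⁻¹' Set.Ioi 0 := by
        ext r; simp [Set.mem_iInter]
      rw [this]
      exact isOpen_iInter_of_finite fun i =>
        (continuous_const.mul (hcont i)).isOpen_preimage _ isOpen_Ioi
    have hsub : {r : Fin ν → ℝ | ∀ i, 0 < σj i * H.mulVec r i}
        ⊆ {r : Fin ν → ℝ | ∀ i, 0 ≤ σj i * (H.mulVec r i)} :=
      fun r hr i => le_of_lt (hr i)
    exact interior_maximal hsub hopen (fun i => hσjpos i)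
  · -- containment
    intro r hr i
    by_cases hi : P i
    · rw [hagree i hi]; exact hr i
    · rw [hzero i hi r hr, mul_zero]
end

section
/- (Max-min Lyapunov function decrease, single-output case) Let Γ ∈ ℝ^{n×ν} be a matrix whose kernel is one-dimensional and spanned by a vector v ≫ 0, and such that each row of Γ has exactly one negative entry. Write Γ = [β_{ij} − α_{ij}] with α_{ij}, β_{ij} ≥ 0 and α_{ij}β_{ij} = 0. Let R : ℝ̄₊^n → ℝ̄₊^ν be C¹ with ∂R_j/∂x_i ≥ 0 when α_{ij} > 0 and ∂R_j/∂x_i = 0 when α_{ij} = 0. Then for each index q, along any solution of ẋ = ΓR(x) the quantity (1/v_q)R_q(x(t)) satisfies d/dt [(1/v_q) R_q(x(t))] ≤ 0 whenever (1/v_q)R_q(x(t)) = max_{1≤k≤ν} (1/v_k)R_k(x(t)), and d/dt [(1/v_q) R_q(x(t))] ≥ 0 whenever (1/v_q)R_q(x(t)) = min_{1≤k≤ν} (1/v_k)R_k(x(t)). Consequently V(x) = max_k (1/v_k)R_k(x) − min_k (1/v_k)R_k(x) is nonincreasing along solutions. -/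
open Finset Filter Topology

/-!
Since `Γ v = 0`, `(Γ R)_i = ∑_j Γ_ij v_j (R_j / v_j - R_q / v_q)`. If species `i` is a reactant of
reaction `q`, then `Γ_iq < 0` is the only negative entry of row `i`; so when `R_q / v_q` is the
largest scaled rate every term is `≤ 0`, and `(Γ R)_i ≤ 0`. By the chain rule
`d/dt R_q(x) = ∑_i ∂_i R_q · (Γ R)_i`, where `∂_i R_q` vanishes unless `i` is a reactant of `q` and
is nonnegative otherwise: the maximal scaled rate cannot increase, and dually the minimal one cannot
decrease. A finite maximum of differentiable functions whose maximal members have nonpositive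
derivative has right Dini derivative `≤ 0` and is therefore antitone; with the dual statement for
the minimum this gives the monotonicity of `V`.
-/

theorem antitone_of_frequently_slope_lt {M : ℝ → ℝ} (hM : Continuous M)
    (h : ∀ t r, 0 < r → ∃ᶠ z in 𝓝[>] t, slope M t z < r) : Antitone M := by
  intro a b hab
  exact image_le_of_liminf_slope_right_le_deriv_boundary (B := fun _ => M a) hM.continuousOn
    le_rfl continuousOn_const (fun _ _ => hasDerivWithinAt_const _ _ _)
    (fun t _ r hr => h t r hr) ⟨hab, le_rfl⟩

theorem eventually_lt_add_mul_sub_of_hasDerivAt {g : ℝ → ℝ} {g' m r t : ℝ}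
    (hg : HasDerivAt g g' t) (hle : g t ≤ m) (hsign : g t = m → g' ≤ 0) (hr : 0 < r) :
    ∀ᶠ z in 𝓝[>] t, g z < m + r * (z - t) := by
  rcases hle.lt_or_eq with hlt | heq
  · filter_upwards [nhdsWithin_le_nhds (hg.continuousAt.eventually_lt_const hlt),
      self_mem_nhdsWithin] with z hz (htz : t < z)
    nlinarith
  · have hslope : ∀ᶠ z in 𝓝[>] t, slope g t z < r :=
      (hasDerivAt_iff_tendsto_slope.1 hg |>.mono_left (nhdsWithin_mono t fun z hz => ne_of_gt hz))
        |>.eventually_lt_const ((hsign heq).trans_lt hr)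
    filter_upwards [hslope, self_mem_nhdsWithin] with z hz (htz : t < z)
    rw [slope_def_field, div_lt_iff₀ (sub_pos.2 htz)] at hz
    linarith

namespace Finset

variable {ι : Type*} {s : Finset ι} (hs : s.Nonempty) {f : ι → ℝ → ℝ}

theorem eventually_slope_sup'_lt {f' : ι → ℝ} {t r : ℝ}
    (hd : ∀ k ∈ s, HasDerivAt (f k) (f' k) t)
    (hmax : ∀ k ∈ s, (∀ j ∈ s, f j t ≤ f k t) → f' k ≤ 0) (hr : 0 < r) :
    ∀ᶠ z in 𝓝[>] t, slope (fun u => s.sup' hs (f · u)) t z < r := by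
  have hk : ∀ k ∈ s, ∀ᶠ z in 𝓝[>] t, f k z < s.sup' hs (f · t) + r * (z - t) :=
    fun k hk => eventually_lt_add_mul_sub_of_hasDerivAt (hd k hk) (le_sup' (f · t) hk)
      (fun heq => hmax k hk fun j hj => heq ▸ le_sup' (f · t) hj) hr
  filter_upwards [(eventually_all_finset s).2 hk, self_mem_nhdsWithin] with z hz (htz : t < z)
  rw [slope_def_field, div_lt_iff₀ (sub_pos.2 htz), sub_lt_iff_lt_add']
  exact (sup'_lt_iff hs).2 hz

theorem antitone_sup'_of_hasDerivAt {f' : ι → ℝ → ℝ}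
    (hd : ∀ k ∈ s, ∀ t, HasDerivAt (f k) (f' k t) t)
    (hmax : ∀ t, ∀ k ∈ s, (∀ j ∈ s, f j t ≤ f k t) → f' k t ≤ 0) :
    Antitone fun t => s.sup' hs (f · t) :=
  antitone_of_frequently_slope_lt
    (Continuous.finset_sup'_apply hs fun k hk => continuous_iff_continuousAt.2 fun t =>
      (hd k hk t).continuousAt)
    fun t _ hr => (eventually_slope_sup'_lt hs (fun k hk => hd k hk t) (hmax t) hr).frequently

theorem inf'_eq_neg_sup'_neg {g : ι → ℝ} : s.inf' hs g = -s.sup' hs (-g ·) := by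
  refine le_antisymm ?_ ?_
  · exact le_neg.2 (sup'_le _ _ fun k hk => neg_le_neg (inf'_le g hk))
  · exact le_inf' _ _ fun k hk => neg_le.1 (le_sup' (-g ·) hk)

theorem monotone_inf'_of_hasDerivAt {f' : ι → ℝ → ℝ}
    (hd : ∀ k ∈ s, ∀ t, HasDerivAt (f k) (f' k t) t)
    (hmin : ∀ t, ∀ k ∈ s, (∀ j ∈ s, f k t ≤ f j t) → 0 ≤ f' k t) :
    Monotone fun t => s.inf' hs (f · t) := by
  have := antitone_sup'_of_hasDerivAt hs (f := fun k t => -f k t) (fun k hk t => (hd k hk t).neg)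
    fun t k hk hmax => neg_nonpos.2 (hmin t k hk fun j hj => neg_le_neg_iff.1 (hmax j hj))
  intro a b hab
  simpa only [inf'_eq_neg_sup'_neg hs, neg_le_neg_iff] using this hab

end Finset

theorem DifferentiableAt.hasDerivAt_comp_eq_sum_pi_single {ι : Type*} [Fintype ι] [DecidableEq ι]
    {F : (ι → ℝ) → ℝ} {x : ℝ → ι → ℝ} {x' : ι → ℝ} {t : ℝ} (hF : DifferentiableAt ℝ F (x t))
    (hx : HasDerivAt x x' t) :
    HasDerivAt (fun s => F (x s)) (∑ i, fderiv ℝ F (x t) (Pi.single i 1) * x' i) t := by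
  have hsum : fderiv ℝ F (x t) x' = ∑ i, fderiv ℝ F (x t) (Pi.single i 1) * x' i := by
    conv_lhs => rw [pi_eq_sum_univ' x']
    simp only [map_sum, map_smul, smul_eq_mul, mul_comm]
  exact hsum ▸ hF.hasFDerivAt.comp_hasDerivAt t hx

namespace Matrix

variable {m ι : Type*} [Fintype ι] {Γ : Matrix m ι ℝ} {v : ι → ℝ}

theorem mulVec_apply_eq_sum_mul_sub_div (hv : Γ *ᵥ v = 0) (hv0 : ∀ j, v j ≠ 0) (r : ι → ℝ)
    (i : m) (q : ι) : (Γ *ᵥ r) i = ∑ j, Γ i j * v j * (r j / v j - r q / v q) := by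
  have hker : ∑ j, Γ i j * v j = 0 := by simpa [mulVec, dotProduct] using congrFun hv i
  simp only [mul_sub, sum_sub_distrib, ← sum_mul, hker, zero_mul, sub_zero]
  refine sum_congr rfl fun j _ => ?_
  rw [mul_assoc, mul_div_cancel₀ _ (hv0 j)]

theorem mulVec_apply_nonpos_of_forall_div_le (hv : Γ *ᵥ v = 0) (hvpos : ∀ j, 0 < v j)
    {i : m} {q : ι} (hrow : ∀ j ≠ q, 0 ≤ Γ i j) {r : ι → ℝ} (hmax : ∀ k, r k / v k ≤ r q / v q) :
    (Γ *ᵥ r) i ≤ 0 := by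
  rw [mulVec_apply_eq_sum_mul_sub_div hv (fun j => (hvpos j).ne') r i q]
  refine sum_nonpos fun j _ => ?_
  rcases eq_or_ne j q with rfl | hj
  · simp
  · exact mul_nonpos_of_nonneg_of_nonpos (mul_nonneg (hrow j hj) (hvpos j).le)
      (sub_nonpos.2 (hmax j))

theorem mulVec_apply_nonneg_of_forall_le_div (hv : Γ *ᵥ v = 0) (hvpos : ∀ j, 0 < v j)
    {i : m} {q : ι} (hrow : ∀ j ≠ q, 0 ≤ Γ i j) {r : ι → ℝ} (hmin : ∀ k, r q / v q ≤ r k / v k) :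
    0 ≤ (Γ *ᵥ r) i := by
  have := mulVec_apply_nonpos_of_forall_div_le hv hvpos hrow (r := -r)
    fun k => by simpa only [Pi.neg_apply, neg_div, neg_le_neg_iff] using hmin k
  rwa [mulVec_neg, Pi.neg_apply, neg_nonpos] at this

variable [Fintype m] {c : m → ℝ} {q : ι} {r : ι → ℝ}

theorem sum_mul_mulVec_nonpos_of_forall_div_le (hv : Γ *ᵥ v = 0) (hvpos : ∀ j, 0 < v j)
    (hc : ∀ i, c i = 0 ∨ 0 ≤ c i ∧ ∀ j ≠ q, 0 ≤ Γ i j) (hmax : ∀ k, r k / v k ≤ r q / v q) :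
    ∑ i, c i * (Γ *ᵥ r) i ≤ 0 :=
  sum_nonpos fun i _ => (hc i).elim (fun h => by simp [h]) fun ⟨hci, hrow⟩ =>
    mul_nonpos_of_nonneg_of_nonpos hci (mulVec_apply_nonpos_of_forall_div_le hv hvpos hrow hmax)

theorem sum_mul_mulVec_nonneg_of_forall_le_div (hv : Γ *ᵥ v = 0) (hvpos : ∀ j, 0 < v j)
    (hc : ∀ i, c i = 0 ∨ 0 ≤ c i ∧ ∀ j ≠ q, 0 ≤ Γ i j) (hmin : ∀ k, r q / v q ≤ r k / v k) :
    0 ≤ ∑ i, c i * (Γ *ᵥ r) i :=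
  sum_nonneg fun i _ => (hc i).elim (fun h => by simp [h]) fun ⟨hci, hrow⟩ =>
    mul_nonneg hci (mulVec_apply_nonneg_of_forall_le_div hv hvpos hrow hmin)

end Matrix

theorem maxmin_lyapunov_decrease_general (n ν : ℕ) (hν : 0 < ν)
    (α β : Matrix (Fin n) (Fin ν) ℝ)
    (hα : ∀ i j, 0 ≤ α i j)
    (hprod : ∀ i j, α i j * β i j = 0)
    (Γ : Matrix (Fin n) (Fin ν) ℝ) (hΓ : ∀ i j, Γ i j = β i j - α i j)
    (honeneg : ∀ i : Fin n, ∃! j : Fin ν, Γ i j < 0)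
    (v : Fin ν → ℝ) (hvpos : ∀ j, 0 < v j) (hvker : Γ.mulVec v = 0)
    (R : (Fin n → ℝ) → Fin ν → ℝ) (hR : ContDiff ℝ 1 R)
    (hmono : ∀ y : Fin n → ℝ, (∀ i, 0 ≤ y i) → ∀ (i : Fin n) (j : Fin ν),
      (0 < α i j → 0 ≤ fderiv ℝ (fun z => R z j) y (Pi.single i 1)) ∧
      (α i j = 0 → fderiv ℝ (fun z => R z j) y (Pi.single i 1) = 0))
    (x : ℝ → Fin n → ℝ)
    (hsol : ∀ t : ℝ, HasDerivAt x (Γ.mulVec (R (x t))) t)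
    (hxnonneg : ∀ (t : ℝ) (i : Fin n), 0 ≤ x t i) :
    (∀ (t : ℝ) (q : Fin ν),
        (∀ k, R (x t) k / v k ≤ R (x t) q / v q) →
        deriv (fun s => R (x s) q / v q) t ≤ 0) ∧
    (∀ (t : ℝ) (q : Fin ν),
        (∀ k, R (x t) q / v q ≤ R (x t) k / v k) →
        0 ≤ deriv (fun s => R (x s) q / v q) t) ∧
    (∀ s t : ℝ, s ≤ t →
        (univ.sup' ⟨⟨0, hν⟩, mem_univ _⟩ (fun k => R (x t) k / v k) -
          univ.inf' ⟨⟨0, hν⟩, mem_univ _⟩ (fun k => R (x t) k / v k)) ≤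
        (univ.sup' ⟨⟨0, hν⟩, mem_univ _⟩ (fun k => R (x s) k / v k) -
          univ.inf' ⟨⟨0, hν⟩, mem_univ _⟩ (fun k => R (x s) k / v k))) := by
  set c : ℝ → Fin ν → Fin n → ℝ := fun t k i => fderiv ℝ (fun z => R z k) (x t) (Pi.single i 1)
  set d : Fin ν → ℝ → ℝ := fun k t => (∑ i, c t k i * Γ.mulVec (R (x t)) i) / v k
  have hderiv (k : Fin ν) (t : ℝ) : HasDerivAt (fun s => R (x s) k / v k) (d k t) t :=
    (((contDiff_pi.1 hR k).differentiable one_ne_zero (x t)).hasDerivAt_comp_eq_sum_pi_single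
      (hsol t)).div_const (v k)
  have hc (t : ℝ) (q : Fin ν) (i : Fin n) : c t q i = 0 ∨ 0 ≤ c t q i ∧ ∀ j ≠ q, 0 ≤ Γ i j := by
    rcases (hα i q).eq_or_lt with h0 | hpos
    · exact .inl ((hmono _ (hxnonneg t) i q).2 h0.symm)
    · have hΓq : Γ i q < 0 := by
        rw [hΓ, (mul_eq_zero.1 (hprod i q)).resolve_left hpos.ne']
        linarith
      exact .inr ⟨(hmono _ (hxnonneg t) i q).1 hpos,
        fun j hj => not_lt.1 fun hneg => hj ((honeneg i).unique hneg hΓq)⟩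
  have hmax (t : ℝ) (q : Fin ν) (h : ∀ k, R (x t) k / v k ≤ R (x t) q / v q) : d q t ≤ 0 :=
    div_nonpos_of_nonpos_of_nonneg
      (Matrix.sum_mul_mulVec_nonpos_of_forall_div_le hvker hvpos (hc t q) h) (hvpos q).le
  have hmin (t : ℝ) (q : Fin ν) (h : ∀ k, R (x t) q / v q ≤ R (x t) k / v k) : 0 ≤ d q t :=
    div_nonneg (Matrix.sum_mul_mulVec_nonneg_of_forall_le_div hvker hvpos (hc t q) h) (hvpos q).le
  refine ⟨fun t q h => (hderiv q t).deriv ▸ hmax t q h,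
    fun t q h => (hderiv q t).deriv ▸ hmin t q h, fun s t hst => ?_⟩
  have hsup := antitone_sup'_of_hasDerivAt ⟨⟨0, hν⟩, mem_univ _⟩ (fun k _ => hderiv k)
    (fun t k _ h => hmax t k fun j => h j (mem_univ j)) hst
  have hinf := monotone_inf'_of_hasDerivAt ⟨⟨0, hν⟩, mem_univ _⟩ (fun k _ => hderiv k)
    (fun t k _ h => hmin t k fun j => h j (mem_univ j)) hst
  linarith

/-- max-min Lyapunov function decrease for networks whose
stoichiometry matrix has one-dimensional kernel spanned by `v ≫ 0` and a unique
negative entry in each row.  Along any solution of `ẋ = ΓR(x)`, the rate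
`(1/v_q)R_q` is nonincreasing when maximal, nondecreasing when minimal, and
hence `V = max_k (1/v_k)R_k − min_k (1/v_k)R_k` is nonincreasing. -/
theorem maxmin_lyapunov_decrease (n ν : ℕ) (hν : 0 < ν)
    (α β : Matrix (Fin n) (Fin ν) ℝ)
    (hα : ∀ i j, 0 ≤ α i j) (hβ : ∀ i j, 0 ≤ β i j)
    (hprod : ∀ i j, α i j * β i j = 0)
    (Γ : Matrix (Fin n) (Fin ν) ℝ) (hΓ : ∀ i j, Γ i j = β i j - α i j)
    (honeneg : ∀ i : Fin n, ∃! j : Fin ν, Γ i j < 0)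
    (v : Fin ν → ℝ) (hvpos : ∀ j, 0 < v j) (hvker : Γ.mulVec v = 0)
    (hker1 : ∀ u : Fin ν → ℝ, Γ.mulVec u = 0 → ∃ a : ℝ, u = a • v)
    (R : (Fin n → ℝ) → Fin ν → ℝ) (hR : ContDiff ℝ 1 R)
    (hRnonneg : ∀ y : Fin n → ℝ, (∀ i, 0 ≤ y i) → ∀ j, 0 ≤ R y j)
    (hmono : ∀ y : Fin n → ℝ, (∀ i, 0 ≤ y i) → ∀ (i : Fin n) (j : Fin ν),
      (0 < α i j → 0 ≤ fderiv ℝ (fun z => R z j) y (Pi.single i 1)) ∧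
      (α i j = 0 → fderiv ℝ (fun z => R z j) y (Pi.single i 1) = 0))
    (x : ℝ → Fin n → ℝ)
    (hsol : ∀ t : ℝ, HasDerivAt x (Γ.mulVec (R (x t))) t)
    (hxnonneg : ∀ (t : ℝ) (i : Fin n), 0 ≤ x t i) :
    (∀ (t : ℝ) (q : Fin ν),
        (∀ k, R (x t) k / v k ≤ R (x t) q / v q) →
        deriv (fun s => R (x s) q / v q) t ≤ 0) ∧
    (∀ (t : ℝ) (q : Fin ν),
        (∀ k, R (x t) q / v q ≤ R (x t) k / v k) →
        0 ≤ deriv (fun s => R (x s) q / v q) t) ∧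
    (∀ s t : ℝ, s ≤ t →
        (univ.sup' ⟨⟨0, hν⟩, mem_univ _⟩ (fun k => R (x t) k / v k) -
          univ.inf' ⟨⟨0, hν⟩, mem_univ _⟩ (fun k => R (x t) k / v k)) ≤
        (univ.sup' ⟨⟨0, hν⟩, mem_univ _⟩ (fun k => R (x s) k / v k) -
          univ.inf' ⟨⟨0, hν⟩, mem_univ _⟩ (fun k => R (x s) k / v k))) :=
  maxmin_lyapunov_decrease_general n ν hν α β hα hprod Γ hΓ honeneg v hvpos hvker R hR hmono x hsol
    hxnonneg
end
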